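/- Let d ≥ 2. There exists a constant C > 0 depending only on d with the following property. Let t > 0, E > 0, 0 < δ ≤ t, and let parameters satisfy 0 < ε ≤ ā, 6ā ≤ ε₀ ≤ 1. For any two points x₁⁰, x₂⁰ ∈ 𝕋^d with d(x₁⁰, x₂⁰) ≥ ε₀ and any velocity v₁ ∈ ℝ^d with |v₁| ≤ E, there exists a Lebesgue-measurable set K_δ ⊂ ℝ^d with Lebesgue measure |K_δ| ≤ C E ( (ε₀/δ)^{d−1} + (E t)^d E^{d−1} ε₀^{d−1} ) such that: for every v₂ ∈ ℝ^d with |v₂| ≤ E and v₁ − v₂ ∉ K_δ, and for all x₁, x₂ ∈ 𝕋^d with d(x₁, x₁⁰) ≤ ā and d(x₂, x₂⁰) ≤ ā, one has d(x₁ − u v₁, x₂ − u v₂) > ε₀ for every u ∈ [δ, t]. -/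

import Mathlib

open MeasureTheory Real

noncomputable section

/-- The unit torus `(ℝ/ℤ)^d`, with normalized Haar (Lebesgue) measure. -/
abbrev Torus (d : ℕ) := Fin d → AddCircle (1 : ℝ)

/-- Euclidean space `ℝ^d` (velocity space). -/
abbrev Vel (d : ℕ) := EuclideanSpace ℝ (Fin d)

/-- The quotient (Euclidean) distance on the torus `(ℝ/ℤ)^d`. -/
noncomputable def tdist {d : ℕ} (x y : Torus d) : ℝ :=
  Real.sqrt (∑ i, dist (x i) (y i) ^ 2)

/-- Projection `ℝ^d → (ℝ/ℤ)^d`. -/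
noncomputable def toTorus {d : ℕ} (v : Vel d) : Torus d := fun i => (v i : AddCircle (1:ℝ))

/-- The (backward) free flow on the torus: `x - u v`. -/
noncomputable def flow {d : ℕ} (x : Torus d) (u : ℝ) (v : Vel d) : Torus d :=
  x - toTorus (u • v)

/-!
Lift `x₁ - x₂` to `p₀ ∈ [-1/2, 1/2]^d`; its other lifts are `p₀ + m`, `m ∈ ℤ^d`. If the two
trajectories come `ε₀`-close at a time `u ∈ [δ, t]`, then `u (v₁ - v₂)` is `2ε₀`-close to some lift
`p₀ + m` with `|m| ≲ E t`, so `v₁ - v₂` lies in the cylinder of half-length `2E` and radius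
`2ε₀ / u ≤ 2ε₀ / δ` around the axis of `p₀ + m`. A lift with `m ∉ [-3, 3]^d` is at distance at least
`7/2`, so it is reached only after time `u ≥ 1 / (2E)`, which improves the radius to `4Eε₀`.
Summing the volumes `≈ E ρ^(d-1)` of these cylinders over the `≈ max(Et, 1)^d` relevant lifts
gives the bound.
-/

open InnerProductSpace

def intVec {d : ℕ} (m : Fin d → ℤ) : Vel d := WithLp.toLp 2 fun i => (m i : ℝ)

section Torus

variable {d : ℕ}

lemma toTorus_add (a b : Vel d) : toTorus (a + b) = toTorus a + toTorus b := by
  ext i; simp [toTorus]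

lemma toTorus_sub (a b : Vel d) : toTorus (a - b) = toTorus a - toTorus b := by
  ext i; simp [toTorus]

lemma toTorus_intVec (m : Fin d → ℤ) : toTorus (intVec m) = 0 := by
  ext i
  simp [toTorus, intVec]

lemma exists_eq_add_intVec_of_toTorus_eq {a b : Vel d} (h : toTorus a = toTorus b) :
    ∃ m : Fin d → ℤ, a = b + intVec m := by
  have hi (i : Fin d) : ∃ n : ℤ, n • (1 : ℝ) = a i - b i := by
    rw [← AddCircle.coe_eq_zero_iff, AddCircle.coe_sub, sub_eq_zero]
    exact congr_fun h i
  choose m hm using hi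
  refine ⟨m, ?_⟩
  ext i
  have := hm i
  simp only [zsmul_eq_mul, mul_one] at this
  simp [intVec, this]

lemma tdist_eq_dist (x y : Torus d) : tdist x y = dist (WithLp.toLp 2 x) (WithLp.toLp 2 y) := by
  simp [tdist, PiLp.dist_eq_of_L2]

lemma tdist_comm (x y : Torus d) : tdist x y = tdist y x := by
  simp only [tdist_eq_dist, dist_comm]

lemma tdist_triangle (x y z : Torus d) : tdist x z ≤ tdist x y + tdist y z := by
  simp only [tdist_eq_dist]; exact dist_triangle _ _ _

lemma tdist_flow_flow (x y : Torus d) (u : ℝ) (v : Vel d) :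
    tdist (flow x u v) (flow y u v) = tdist x y := by
  simp [tdist, flow]

lemma tdist_eq_sqrt_sum_of_toTorus_eq {q : Vel d} {x y : Torus d} (h : toTorus q = x - y) :
    tdist x y = √(∑ i, ‖(q i : AddCircle (1 : ℝ))‖ ^ 2) := by
  have hi (i : Fin d) : x i - y i = q i := (congr_fun h i).symm
  simp [tdist, dist_eq_norm, hi]

lemma tdist_le_norm_of_toTorus_eq {q : Vel d} {x y : Torus d} (h : toTorus q = x - y) :
    tdist x y ≤ ‖q‖ := by
  rw [tdist_eq_sqrt_sum_of_toTorus_eq h, EuclideanSpace.norm_eq]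
  gcongr with i
  exact QuotientAddGroup.norm_mk_le_norm

lemma exists_toTorus_eq_sub (x y : Torus d) :
    ∃ q : Vel d, toTorus q = x - y ∧ ‖q‖ = tdist x y ∧ ∀ i, |q i| ≤ 1 / 2 := by
  have hi (i : Fin d) : ∃ r : ℝ, (r : AddCircle (1 : ℝ)) = (x - y) i ∧ |r| ≤ 1 / 2 := by
    obtain ⟨r, hr⟩ := QuotientAddGroup.mk_surjective ((x - y) i)
    refine ⟨r - round r, ?_, abs_sub_round r⟩
    simp [← hr]
  choose r hr hr_half using hi
  have hq : toTorus (WithLp.toLp 2 r : Vel d) = x - y := funext hr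
  refine ⟨WithLp.toLp 2 r, hq, ?_, hr_half⟩
  rw [tdist_eq_sqrt_sum_of_toTorus_eq hq, EuclideanSpace.norm_eq]
  congr 1
  refine Finset.sum_congr rfl fun i _ => ?_
  rw [(AddCircle.norm_coe_eq_abs_iff (p := (1 : ℝ)) one_ne_zero).mpr (by simpa using hr_half i)]
  simp

end Torus

section Cylinder

variable {F : Type*} [NormedAddCommGroup F] [InnerProductSpace ℝ F]

def solidCylinder (u : F) (L ρ : ℝ) : Set F :=
  {w | |⟪w, u⟫_ℝ| ≤ L ∧ ‖w - ⟪w, u⟫_ℝ • u‖ ≤ ρ}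

lemma isClosed_solidCylinder (u : F) (L ρ : ℝ) : IsClosed (solidCylinder u L ρ) := by
  have hinner : Continuous fun w : F => ⟪w, u⟫_ℝ := by fun_prop
  exact (isClosed_le hinner.abs continuous_const).inter
    (isClosed_le (continuous_id.sub (hinner.smul continuous_const)).norm continuous_const)

lemma solidCylinder_mono {u : F} {L L' ρ ρ' : ℝ} (hL : L ≤ L') (hρ : ρ ≤ ρ') :
    solidCylinder u L ρ ⊆ solidCylinder u L' ρ' :=
  fun _ ⟨h₁, h₂⟩ => ⟨h₁.trans hL, h₂.trans hρ⟩

lemma preimage_solidCylinder (f : F ≃ₗᵢ[ℝ] F) (u : F) (L ρ : ℝ) :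
    f ⁻¹' solidCylinder (f u) L ρ = solidCylinder u L ρ := by
  ext w
  simp only [solidCylinder, Set.mem_preimage, Set.mem_ofPred_eq, f.inner_map_map]
  rw [← f.map_smul, ← f.map_sub, f.norm_map]

lemma norm_sub_inner_smul_le {u : F} (hu : ‖u‖ = 1) (v : F) : ‖v - ⟪v, u⟫_ℝ • u‖ ≤ ‖v‖ := by
  have h : ‖v - ⟪v, u⟫_ℝ • u‖ ^ 2 = ‖v‖ ^ 2 - ⟪v, u⟫_ℝ ^ 2 := by
    rw [norm_sub_sq_real, real_inner_smul_right, norm_smul, hu, Real.norm_eq_abs]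
    ring_nf
    rw [sq_abs]
    ring
  rw [← sq_le_sq₀ (norm_nonneg _) (norm_nonneg _), h]
  linarith [sq_nonneg ⟪v, u⟫_ℝ]

lemma mem_solidCylinder_of_norm_smul_sub_le {P w : F} {s r : ℝ} (hP : P ≠ 0) (hs : 0 < s)
    (h : ‖s • w - P‖ ≤ r) : w ∈ solidCylinder (‖P‖⁻¹ • P) ‖w‖ (r / s) := by
  set u := ‖P‖⁻¹ • P
  have hu : ‖u‖ = 1 := norm_smul_inv_norm hP
  have hPu : P = ‖P‖ • u := by simp [u, smul_smul, norm_ne_zero_iff.mpr hP]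
  refine ⟨?_, ?_⟩
  · simpa [hu] using abs_real_inner_le_norm w u
  · have key : s • (w - ⟪w, u⟫_ℝ • u) = (s • w - P) - ⟪s • w - P, u⟫_ℝ • u := by
      rw [inner_sub_left, real_inner_smul_left, hPu, real_inner_smul_left,
        real_inner_self_eq_norm_sq, hu]
      module
    rw [le_div_iff₀ hs, mul_comm, ← abs_of_pos hs, ← Real.norm_eq_abs, ← norm_smul, key]
    exact (norm_sub_inner_smul_le hu _).trans h

end Cylinder

lemma volume_solidCylinder_single_le (n : ℕ) {L ρ : ℝ} (hL : 0 ≤ L) (hρ : 0 ≤ ρ) :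
    volume (solidCylinder (EuclideanSpace.single 0 1 : Vel (n + 1)) L ρ)
      ≤ ENNReal.ofReal (2 * L * (2 * ρ) ^ n) := by
  set box : Set (Fin (n + 1) → ℝ) :=
    Set.univ.pi (Fin.cons (Set.Icc (-L) L) fun _ => Set.Icc (-ρ) ρ)
  have hsub :
      solidCylinder (EuclideanSpace.single 0 1 : Vel (n + 1)) L ρ ⊆ WithLp.ofLp ⁻¹' box := by
    rintro w ⟨hw₀, hw⟩
    simp only [EuclideanSpace.inner_single_right, conj_trivial, one_mul] at hw₀ hw
    refine Set.mem_univ_pi.mpr (Fin.cases ?_ fun i => ?_)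
    · simpa using abs_le.mp hw₀
    · have := (PiLp.norm_apply_le _ i.succ).trans hw
      simpa [abs_le] using this
  calc volume (solidCylinder (EuclideanSpace.single 0 1 : Vel (n + 1)) L ρ)
      ≤ volume (WithLp.ofLp ⁻¹' box : Set (Vel (n + 1))) := measure_mono hsub
    _ = volume box := (PiLp.volume_preserving_ofLp _).measure_preimage <|
        (MeasurableSet.univ_pi fun i =>
          Fin.cases measurableSet_Icc (fun _ => measurableSet_Icc) i).nullMeasurableSet
    _ = ENNReal.ofReal (2 * L * (2 * ρ) ^ n) := by
        rw [volume_pi_pi, Fin.prod_univ_succ]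
        simp only [Fin.cons_zero, Fin.cons_succ, Real.volume_Icc, Finset.prod_const,
          Finset.card_univ, Fintype.card_fin]
        rw [← ENNReal.ofReal_pow (by linarith), ← ENNReal.ofReal_mul (by linarith)]
        ring_nf

lemma volume_solidCylinder_le {d : ℕ} (hd : 1 ≤ d) {u : Vel d} (hu : ‖u‖ = 1) {L ρ : ℝ}
    (hL : 0 ≤ L) (hρ : 0 ≤ ρ) :
    volume (solidCylinder u L ρ) ≤ ENNReal.ofReal (2 * L * (2 * ρ) ^ (d - 1)) := by
  obtain ⟨n, rfl⟩ := Nat.exists_eq_add_of_le' hd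
  set e : Vel (n + 1) := EuclideanSpace.single 0 1
  set f : Vel (n + 1) ≃ₗᵢ[ℝ] Vel (n + 1) := Submodule.reflection (ℝ ∙ (u - e))ᗮ
  have hfu : f u = e := Submodule.reflection_sub (by simp [hu, e])
  rw [← preimage_solidCylinder f, hfu, f.measurePreserving.measure_preimage
    (isClosed_solidCylinder _ _ _).measurableSet.nullMeasurableSet]
  simpa using volume_solidCylinder_single_le n hL hρ

section BadSet

variable {d : ℕ}

def box (d R : ℕ) : Finset (Fin d → ℤ) :=
  Fintype.piFinset fun _ => Finset.Icc (-(R : ℤ)) R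

lemma card_box (d R : ℕ) : (box d R).card = (2 * R + 1) ^ d := by
  simp only [box, Fintype.card_piFinset, Int.card_Icc, Finset.prod_const, Finset.card_univ,
    Fintype.card_fin]
  congr 1
  omega

lemma mem_box_of_norm_lt {p₀ : Vel d} (hp₀ : ∀ i, |p₀ i| ≤ 1 / 2) {m : Fin d → ℤ} {R : ℕ}
    (h : ‖p₀ + intVec m‖ < R + 1 / 2) : m ∈ box d R := by
  refine Fintype.mem_piFinset.mpr fun i => Finset.mem_Icc.mpr (abs_le.mp ?_)
  have hcoord : |(p₀ + intVec m) i| ≤ ‖p₀ + intVec m‖ :=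
    (Real.norm_eq_abs _).symm.trans_le (PiLp.norm_apply_le _ i)
  have hm : ((m i : ℤ) : ℝ) = (p₀ + intVec m) i - p₀ i := by simp [intVec]
  have : |((m i : ℤ) : ℝ)| < R + 1 := by
    rw [hm]
    linarith [abs_sub ((p₀ + intVec m) i) (p₀ i), hp₀ i]
  exact Int.le_of_lt_add_one (by exact_mod_cast this)

def badSet (p₀ : Vel d) (R : ℕ) (L ρ₁ ρ₂ : ℝ) : Set (Vel d) :=
  ⋃ m ∈ box d R, solidCylinder (‖p₀ + intVec m‖⁻¹ • (p₀ + intVec m)) L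
    (if m ∈ box d 3 then ρ₁ else min ρ₁ ρ₂)

lemma measurableSet_badSet (p₀ : Vel d) (R : ℕ) (L ρ₁ ρ₂ : ℝ) :
    MeasurableSet (badSet p₀ R L ρ₁ ρ₂) :=
  (box d R).measurableSet_biUnion fun _ _ => (isClosed_solidCylinder _ _ _).measurableSet

lemma volume_badSet_le (hd : 1 ≤ d) {p₀ : Vel d} (hP : ∀ m, p₀ + intVec m ≠ 0) (R : ℕ)
    {L ρ₁ ρ₂ : ℝ} (hL : 0 ≤ L) (hρ₁ : 0 ≤ ρ₁) (hρ₂ : 0 ≤ ρ₂) :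
    volume (badSet p₀ R L ρ₁ ρ₂) ≤ ENNReal.ofReal (2 * L * (2 * ρ₁) ^ (d - 1) * 7 ^ d
      + 2 * L * (2 * min ρ₁ ρ₂) ^ (d - 1) * (2 * R + 1) ^ d) := by
  set ρ : (Fin d → ℤ) → ℝ := fun m => if m ∈ box d 3 then ρ₁ else min ρ₁ ρ₂
  have hρ (m) : 0 ≤ ρ m := by simp only [ρ]; split_ifs <;> positivity
  have hsum : ∑ m ∈ box d R, 2 * L * (2 * ρ m) ^ (d - 1)
      ≤ 2 * L * (2 * ρ₁) ^ (d - 1) * 7 ^ d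
        + 2 * L * (2 * min ρ₁ ρ₂) ^ (d - 1) * (2 * R + 1) ^ d := by
    have hnear : ((box d R).filter (· ∈ box d 3)).card ≤ 7 ^ d :=
      (Finset.card_le_card fun m hm => (Finset.mem_filter.mp hm).2).trans (card_box d 3).le
    have hfar : ((box d R).filter (· ∉ box d 3)).card ≤ (2 * R + 1) ^ d :=
      (Finset.card_filter_le _ _).trans (card_box d R).le
    simp only [ρ, apply_ite (fun r => 2 * L * (2 * r) ^ (d - 1)), Finset.sum_ite,
      Finset.sum_const, nsmul_eq_mul]
    rw [mul_comm (_ : ℝ), mul_comm ((Finset.card _ : ℕ) : ℝ)]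
    gcongr
    · exact_mod_cast hnear
    · exact_mod_cast hfar
  calc volume (badSet p₀ R L ρ₁ ρ₂)
      ≤ ∑ m ∈ box d R, volume (solidCylinder (‖p₀ + intVec m‖⁻¹ • (p₀ + intVec m)) L (ρ m)) :=
        measure_biUnion_finset_le _ _
    _ ≤ ∑ m ∈ box d R, ENNReal.ofReal (2 * L * (2 * ρ m) ^ (d - 1)) :=
        Finset.sum_le_sum fun m _ =>
          volume_solidCylinder_le hd (norm_smul_inv_norm (hP m)) hL (hρ m)
    _ = ENNReal.ofReal (∑ m ∈ box d R, 2 * L * (2 * ρ m) ^ (d - 1)) :=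
        (ENNReal.ofReal_sum_of_nonneg fun m _ => by have := hρ m; positivity).symm
    _ ≤ _ := ENNReal.ofReal_le_ofReal hsum

end BadSet

lemma max_one_pow_mul_le_add {a y A X : ℝ} (n : ℕ) (ha : 0 ≤ a) (hy : 0 ≤ y) (hyA : y ≤ A)
    (hyX : y ≤ X) : max a 1 ^ n * y ≤ A + a ^ n * X := by
  have han := pow_nonneg ha n
  rcases le_total a 1 with h | h
  · rw [max_eq_right h, one_pow, one_mul]
    nlinarith
  · rw [max_eq_left h]
    nlinarith

lemma badSet_volume_bound_le (d : ℕ) {E t δ ε₀ : ℝ} (hE : 0 < E) (ht : 0 ≤ t) (hδ : 0 < δ)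
    (hε₀ : 0 < ε₀) :
    2 * (2 * E) * (2 * (2 * ε₀ / δ)) ^ (d - 1) * 7 ^ d
        + 2 * (2 * E) * (2 * min (2 * ε₀ / δ) (4 * E * ε₀)) ^ (d - 1)
          * (2 * ((⌈2 * E * t⌉₊ + 2 : ℕ) : ℝ) + 1) ^ d
      ≤ 4 * 8 ^ (d - 1) * (7 ^ d + 11 ^ d) * E
          * ((ε₀ / δ) ^ (d - 1) + (E * t) ^ d * E ^ (d - 1) * ε₀ ^ (d - 1)) := by
  set A := (ε₀ / δ) ^ (d - 1)
  set X := E ^ (d - 1) * ε₀ ^ (d - 1)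
  set K : ℝ := 8 ^ (d - 1)
  have hA : 0 ≤ A := by positivity
  have hX : 0 ≤ X := by positivity
  have hmin : 0 ≤ min (2 * ε₀ / δ) (4 * E * ε₀) := by positivity
  have hnear : (2 * (2 * ε₀ / δ)) ^ (d - 1) ≤ K * A := by
    rw [← mul_pow]
    refine pow_le_pow_left₀ (by positivity) ?_ _
    rw [mul_div_assoc]
    linarith [div_pos hε₀ hδ]
  have hfar₁ : (2 * min (2 * ε₀ / δ) (4 * E * ε₀)) ^ (d - 1) ≤ K * A :=
    (pow_le_pow_left₀ (by positivity) (by gcongr; exact min_le_left _ _) _).trans hnear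
  have hfar₂ : (2 * min (2 * ε₀ / δ) (4 * E * ε₀)) ^ (d - 1) ≤ K * X := by
    rw [show K * X = (8 * (E * ε₀)) ^ (d - 1) by simp only [K, X]; rw [mul_pow, mul_pow]]
    refine pow_le_pow_left₀ (by positivity) ?_ _
    linarith [min_le_right (2 * ε₀ / δ) (4 * E * ε₀)]
  have hcount : (2 * ((⌈2 * E * t⌉₊ + 2 : ℕ) : ℝ) + 1) ^ d ≤ 11 ^ d * max (E * t) 1 ^ d := by
    rw [← mul_pow]
    gcongr
    push_cast
    linarith [Nat.ceil_lt_add_one (by positivity : 0 ≤ 2 * E * t), le_max_left (E * t) 1,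
      le_max_right (E * t) 1]
  have hkey := max_one_pow_mul_le_add d (by positivity : 0 ≤ E * t) (by positivity) hfar₁ hfar₂
  have hB : 0 ≤ (E * t) ^ d * X := by positivity
  calc _ ≤ 2 * (2 * E) * (K * A) * 7 ^ d
        + 2 * (2 * E) * (2 * min (2 * ε₀ / δ) (4 * E * ε₀)) ^ (d - 1)
          * (11 ^ d * max (E * t) 1 ^ d) := by
        gcongr
    _ ≤ 4 * E * (K * A) * 7 ^ d + 4 * E * 11 ^ d * (K * A + (E * t) ^ d * (K * X)) := by
        nlinarith [mul_le_mul_of_nonneg_left hkey (by positivity : (0 : ℝ) ≤ 4 * E * 11 ^ d)]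
    _ ≤ _ := by
        have : 0 ≤ 4 * E * K * 7 ^ d * ((E * t) ^ d * X) := by positivity
        nlinarith

lemma mem_badSet_of_norm_smul_sub_le {d : ℕ} {p₀ w : Vel d} (hp₀ : ∀ i, |p₀ i| ≤ 1 / 2)
    {m : Fin d → ℤ} (hP : p₀ + intVec m ≠ 0) {E t δ s ε₀ r : ℝ} (hw : ‖w‖ ≤ 2 * E)
    (hδ : 0 < δ) (hδs : δ ≤ s) (hst : s ≤ t) (hr : r ≤ 2 * ε₀) (hε₀ : ε₀ ≤ 1)
    (h : ‖s • w - (p₀ + intVec m)‖ ≤ r) :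
    w ∈ badSet p₀ (⌈2 * E * t⌉₊ + 2) (2 * E) (2 * ε₀ / δ) (4 * E * ε₀) := by
  have hs : 0 < s := hδ.trans_le hδs
  have hr₀ : 0 ≤ r := (norm_nonneg _).trans h
  have hP_le : ‖p₀ + intVec m‖ ≤ r + s * ‖w‖ := by
    have := norm_sub_norm_le (p₀ + intVec m) (s • w)
    rw [norm_sub_rev, norm_smul, Real.norm_of_nonneg hs.le] at this
    linarith
  have hsw : s * ‖w‖ ≤ 2 * E * t := by nlinarith [norm_nonneg w]
  have hm : m ∈ box d (⌈2 * E * t⌉₊ + 2) := by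
    refine mem_box_of_norm_lt hp₀ ?_
    push_cast
    linarith [Nat.le_ceil (2 * E * t)]
  have hr_s : r / s ≤ 2 * ε₀ / δ := div_le_div₀ (by linarith) hr hδ hδs
  refine Set.mem_biUnion hm
    (solidCylinder_mono hw ?_ (mem_solidCylinder_of_norm_smul_sub_le hP hs h))
  split_ifs with hnear
  · exact hr_s
  · -- a far lift is at distance `≥ 7/2`, so it is reached only after time `s ≥ 1 / (2E)`
    have hfar : 7 / 2 ≤ ‖p₀ + intVec m‖ :=
      not_lt.mp fun hlt => hnear (mem_box_of_norm_lt hp₀ (by push_cast; linarith))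
    have hE_s : 1 ≤ 2 * E * s := by nlinarith [norm_nonneg w]
    refine le_min hr_s ((div_le_iff₀ hs).mpr ?_)
    nlinarith [mul_le_mul_of_nonneg_left hE_s (by linarith : (0 : ℝ) ≤ 2 * ε₀)]

lemma exists_norm_smul_sub_le_of_tdist_flow_le {d : ℕ} {x₁ x₂ y₁ y₂ : Torus d} {p₀ v₁ v₂ : Vel d}
    (hp₀ : toTorus p₀ = x₁ - x₂) {s ε₀ : ℝ} (h : tdist (flow y₁ s v₁) (flow y₂ s v₂) ≤ ε₀) :
    ∃ m : Fin d → ℤ,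
      ‖s • (v₁ - v₂) - (p₀ + intVec m)‖ ≤ ε₀ + tdist y₁ x₁ + tdist y₂ x₂ := by
  have hflow : flow x₁ s v₁ - flow x₂ s v₂ = toTorus (p₀ - s • (v₁ - v₂)) := by
    simp only [flow, toTorus_sub, smul_sub, hp₀]
    abel
  obtain ⟨q, hq, hq_norm, -⟩ := exists_toTorus_eq_sub (flow x₁ s v₁) (flow x₂ s v₂)
  obtain ⟨m, rfl⟩ := exists_eq_add_intVec_of_toTorus_eq (hq.trans hflow)
  refine ⟨m, ?_⟩
  rw [show s • (v₁ - v₂) - (p₀ + intVec m) = -(p₀ - s • (v₁ - v₂) + intVec m) by abel,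
    norm_neg, hq_norm]
  calc tdist (flow x₁ s v₁) (flow x₂ s v₂)
      ≤ tdist (flow x₁ s v₁) (flow y₁ s v₁) + tdist (flow y₁ s v₁) (flow y₂ s v₂)
          + tdist (flow y₂ s v₂) (flow x₂ s v₂) := by
        linarith [tdist_triangle (flow x₁ s v₁) (flow y₁ s v₁) (flow x₂ s v₂),
          tdist_triangle (flow y₁ s v₁) (flow y₂ s v₂) (flow x₂ s v₂)]
    _ ≤ ε₀ + tdist y₁ x₁ + tdist y₂ x₂ := by
        rw [tdist_flow_flow, tdist_flow_flow, tdist_comm x₁]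
        linarith

/-- Geometric control of free trajectories on the torus (separation after time `δ`):
given `x₁⁰, x₂⁰` at distance at least `ε₀` and `|v₁| ≤ E`, there is a bad set `K_δ` of
velocities of measure at most `C E ((ε₀/δ)^{d-1} + (Et)^d E^{d-1} ε₀^{d-1})` such that if
`v₁ - v₂ ∉ K_δ`, `|v₂| ≤ E`, and `x₁, x₂` are `ā`-close to `x₁⁰, x₂⁰`, then
`d(x₁ - u v₁, x₂ - u v₂) > ε₀` for all `u ∈ [δ,t]`. -/
theorem free_flow_separation
    (d : ℕ) (hd : 2 ≤ d) :
    ∃ C > (0:ℝ), ∀ t E δ ε abar ε₀ : ℝ,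
      0 < t → 0 < E → 0 < δ → δ ≤ t → 0 < ε → ε ≤ abar → 6 * abar ≤ ε₀ → ε₀ ≤ 1 →
      ∀ (x₁ x₂ : Torus d) (v₁ : Vel d), ε₀ ≤ tdist x₁ x₂ → ‖v₁‖ ≤ E →
      ∃ K : Set (Vel d), MeasurableSet K ∧
        volume K ≤ ENNReal.ofReal
          (C * E * ((ε₀ / δ) ^ (d - 1) + (E * t) ^ d * E ^ (d - 1) * ε₀ ^ (d - 1))) ∧
        ∀ v₂ : Vel d, ‖v₂‖ ≤ E → v₁ - v₂ ∉ K →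
          ∀ y₁ y₂ : Torus d, tdist y₁ x₁ ≤ abar → tdist y₂ x₂ ≤ abar →
            ∀ u ∈ Set.Icc δ t, ε₀ < tdist (flow y₁ u v₁) (flow y₂ u v₂) := by
  refine ⟨4 * 8 ^ (d - 1) * (7 ^ d + 11 ^ d), by positivity, ?_⟩
  intro t E δ ε abar ε₀ ht hE hδ hδt hε hεa h6a hε₀1 x₁ x₂ v₁ hx hv₁
  have hε₀ : 0 < ε₀ := by linarith
  obtain ⟨p₀, hp₀, -, hp₀_half⟩ := exists_toTorus_eq_sub x₁ x₂
  have hP (m : Fin d → ℤ) : p₀ + intVec m ≠ 0 := by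
    refine norm_pos_iff.mp (hε₀.trans_le (hx.trans (tdist_le_norm_of_toTorus_eq ?_)))
    rw [toTorus_add, toTorus_intVec, add_zero, hp₀]
  refine ⟨badSet p₀ (⌈2 * E * t⌉₊ + 2) (2 * E) (2 * ε₀ / δ) (4 * E * ε₀),
    measurableSet_badSet .., ?_, ?_⟩
  · refine (volume_badSet_le (by omega) hP _ (by positivity) (by positivity) (by positivity)).trans
      (ENNReal.ofReal_le_ofReal ?_)
    exact badSet_volume_bound_le d hE ht.le hδ hε₀
  · intro v₂ hv₂ hK y₁ y₂ hy₁ hy₂ u ⟨hδu, hut⟩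
    by_contra! hclose
    obtain ⟨m, hm⟩ := exists_norm_smul_sub_le_of_tdist_flow_le hp₀ hclose
    exact hK (mem_badSet_of_norm_smul_sub_le hp₀_half (hP m)
      (by linarith [norm_sub_le v₁ v₂]) hδ hδu hut (by linarith) hε₀1 hm)
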